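/- Let V₂ be the 6×6 integer matrix with rows [3,0,1,0,0,4], [-1,2,0,0,0,0], [1,0,-1,1,0,0], [0,0,0,2,0,0], [0,0,0,0,-1,1], [4,0,0,0,0,4]. Then det(V₂ - x·V₂ᵀ), viewed as a polynomial in x, equals x³. -/

import Mathlib

/-!
Write `A = V₂ - x • V₂ᵀ` and `s = 1 - x`. Both `V₂` and `A` are supported on the diagonal and on
the edges `0–1, 0–2, 0–5, 2–3, 4–5` of a tree, so a permutation contributing to `det A` is either a
product of transpositions within the blocks `{0,1}, {2,3}, {4,5}`, or the transposition `(0 2)`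
(resp. `(0 5)`) times a permutation of the block `{4,5}` (resp. `{2,3}`), fixing the rest. Hence
`det A = (6s² + x)(x - 2s²)(x - 4s²) - 4s⁴(x - 4s²) + 32s⁴(x - 2s²)`, which expands to `x³`.
-/

open Matrix

section TreeSupport

variable {R : Type*} [CommRing R]

theorem det_fin_six_of_tree_support
    (a₀₀ a₀₁ a₀₂ a₀₅ a₁₀ a₁₁ a₂₀ a₂₂ a₂₃ a₃₂ a₃₃ a₄₄ a₄₅ a₅₀ a₅₄ a₅₅ : R) :
    det !![a₀₀, a₀₁, a₀₂, 0, 0, a₀₅;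
           a₁₀, a₁₁, 0, 0, 0, 0;
           a₂₀, 0, a₂₂, a₂₃, 0, 0;
           0, 0, a₃₂, a₃₃, 0, 0;
           0, 0, 0, 0, a₄₄, a₄₅;
           a₅₀, 0, 0, 0, a₅₄, a₅₅] =
      (a₀₀ * a₁₁ - a₀₁ * a₁₀) * (a₂₂ * a₃₃ - a₂₃ * a₃₂) * (a₄₄ * a₅₅ - a₄₅ * a₅₄)
        - a₀₂ * a₂₀ * a₁₁ * a₃₃ * (a₄₄ * a₅₅ - a₄₅ * a₅₄)
        - a₀₅ * a₅₀ * a₁₁ * a₄₄ * (a₂₂ * a₃₃ - a₂₃ * a₃₂) := by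
  simp only [det_succ_row_zero, Nat.succ_eq_add_one, Nat.reduceAdd, Fin.isValue, of_apply, cons_val',
    cons_val_fin_one, cons_val_zero, submatrix_apply, Fin.succ_zero_eq_one, Fin.succAbove, cons_val_one,
    submatrix_submatrix, Function.comp_apply, Fin.succ_one_eq_two, cons_val, Fin.reduceSucc, det_unique,
    Fin.default_eq_zero, Fin.castSucc_zero, Fin.sum_univ_succ, Fin.coe_ofNat_eq_mod, Nat.zero_mod, pow_zero, one_mul,
    lt_self_iff_false, ↓reduceIte, Fin.castSucc_one, Finset.univ_unique, Fin.val_succ, Fin.val_eq_zero, zero_add,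
    pow_one, Fin.castSucc_succ, neg_mul, Fin.succ_pos, Finset.sum_neg_distrib, Finset.sum_singleton, not_lt_zero,
    Fin.reduceCastSucc, even_two, Even.neg_pow, one_pow, Fin.reduceLT, Fin.lt_one_iff, Fin.reduceEq, zero_mul, mul_zero,
    neg_zero, add_zero, cons_val_succ, mul_neg, neg_neg]
  ring

theorem sub_smul_transpose_of_tree_support
    (t a₀₀ a₀₁ a₀₂ a₀₅ a₁₀ a₁₁ a₂₀ a₂₂ a₂₃ a₃₂ a₃₃ a₄₄ a₄₅ a₅₀ a₅₄ a₅₅ : R) :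
    let V : Matrix (Fin 6) (Fin 6) R :=
      !![a₀₀, a₀₁, a₀₂, 0, 0, a₀₅;
         a₁₀, a₁₁, 0, 0, 0, 0;
         a₂₀, 0, a₂₂, a₂₃, 0, 0;
         0, 0, a₃₂, a₃₃, 0, 0;
         0, 0, 0, 0, a₄₄, a₄₅;
         a₅₀, 0, 0, 0, a₅₄, a₅₅]
    V - t • Vᵀ =
      !![a₀₀ - t * a₀₀, a₀₁ - t * a₁₀, a₀₂ - t * a₂₀, 0, 0, a₀₅ - t * a₅₀;
         a₁₀ - t * a₀₁, a₁₁ - t * a₁₁, 0, 0, 0, 0;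
         a₂₀ - t * a₀₂, 0, a₂₂ - t * a₂₂, a₂₃ - t * a₃₂, 0, 0;
         0, 0, a₃₂ - t * a₂₃, a₃₃ - t * a₃₃, 0, 0;
         0, 0, 0, 0, a₄₄ - t * a₄₄, a₄₅ - t * a₅₄;
         a₅₀ - t * a₀₅, 0, 0, 0, a₅₄ - t * a₄₅, a₅₅ - t * a₅₅] := by
  ext i j
  fin_cases i <;> fin_cases j <;> simp

end TreeSupport

open Polynomial

theorem V2_alexander_poly :
    (let V₂ : Matrix (Fin 6) (Fin 6) (Polynomial ℤ) :=
      !![3, 0, 1, 0, 0, 4;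
         -1, 2, 0, 0, 0, 0;
         1, 0, -1, 1, 0, 0;
         0, 0, 0, 2, 0, 0;
         0, 0, 0, 0, -1, 1;
         4, 0, 0, 0, 0, 4]
     (V₂ - (X : Polynomial ℤ) • V₂ᵀ).det) = X ^ 3 := by
  dsimp only
  rw [sub_smul_transpose_of_tree_support, det_fin_six_of_tree_support]
  ring
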